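/- arXiv:2311.07610 — 3 statements merged into one kernel-verified Lean document; each statement's English description precedes it below -/
import Mathlib

section
/- For every positive integer n, n·∑_{k=1}^{⌊n/2⌋} ((-1)^{k-1}/k)·C(n-k-1, k-1)·L_{n-2k} equals L_n - (-1)^n·4 if n ≡ 0 (mod 5), and equals L_n + (-1)^n otherwise. -/
/-
For `n ≥ 1` and any `x`, `n * ∑ (-1)^(k-1)/k * C(n-k-1,k-1) * x^(n-2k) = x^n - C_n(x)`, where `C_n`
is the Vieta–Lucas polynomial (`C_n(t + 1/t) = t^n + t^(-n)`): indeed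
`n/k * C(n-k-1,k-1) = C(n-k,k) + C(n-k-1,k-1)`, `C_n = S_n - S_(n-2)`, and the Vieta–Fibonacci
polynomial has the expansion `S_n(x) = ∑ (-1)^k C(n-k,k) x^(n-2k)`.
Evaluating at the golden ratio `φ` and its conjugate `ψ`, for which `L_m = φ^m + ψ^m`, the left side
becomes `L_n - C_n(φ) - C_n(ψ)`. As `φ = 2 cos(π/5)` and `ψ = 2 cos(3π/5)`, the sequences `C_n(φ)`,
`C_n(ψ)` change sign under `n ↦ n + 5`, and the correction term is read off from `n < 5`.
-/

open Finset Real

/-- Fibonacci numbers extended to integer indices. -/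
def fibZ (n : ℤ) : ℤ :=
  if 0 ≤ n then (Nat.fib n.toNat : ℤ)
  else (-1) ^ ((-n).toNat + 1) * (Nat.fib (-n).toNat : ℤ)

/-- Lucas numbers on natural indices. -/
def lucasNat : ℕ → ℤ
  | 0 => 2
  | 1 => 1
  | n + 2 => lucasNat (n + 1) + lucasNat n

/-- Lucas numbers extended to integer indices. -/
def lucasZ (n : ℤ) : ℤ :=
  if 0 ≤ n then lucasNat n.toNat
  else (-1) ^ (-n).toNat * lucasNat (-n).toNat

noncomputable def gold : ℝ := (1 + Real.sqrt 5) / 2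
noncomputable def gold' : ℝ := (1 - Real.sqrt 5) / 2

open Polynomial

theorem Nat.choose_add_one_sub_succ (n k : ℕ) :
    (n + 1 - k).choose (k + 1) = (n - k).choose k + (n - k).choose (k + 1) := by
  rcases le_or_gt k n with h | h
  · rw [show n + 1 - k = n - k + 1 by omega, Nat.choose_succ_succ']
  · simp [show n + 1 - k = 0 by omega, show n - k = 0 by omega,
      Nat.choose_eq_zero_of_lt (show 0 < k by omega)]

namespace Polynomial.Chebyshev

variable {R : Type*} [CommRing R]

theorem C_eq_S_sub_S (n : ℤ) : C R n = S R n - S R (n - 2) := by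
  linear_combination C_eq_S_sub_X_mul_S R n + S_sub_two R n

theorem S_summand_add_two (x : R) (n k : ℕ) :
    (-1) ^ (k + 1) * ((n + 2 - (k + 1)).choose (k + 1) : R) * x ^ (n + 2 - 2 * (k + 1)) =
      x * ((-1) ^ (k + 1) * ((n + 1 - (k + 1)).choose (k + 1) : R) * x ^ (n + 1 - 2 * (k + 1)))
        - (-1) ^ k * ((n - k).choose k : R) * x ^ (n - 2 * k) := by
  have hx : ((n - k).choose (k + 1) : R) * (x * x ^ (n + 1 - 2 * (k + 1))) =
      (n - k).choose (k + 1) * x ^ (n - 2 * k) := by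
    rcases le_or_gt (2 * k + 1) n with h | h
    · rw [← pow_succ', show n + 1 - 2 * (k + 1) + 1 = n - 2 * k by omega]
    · simp [Nat.choose_eq_zero_of_lt (show n - k < k + 1 by omega)]
  rw [show n + 2 - (k + 1) = n + 1 - k by omega, show n + 2 - 2 * (k + 1) = n - 2 * k by omega,
    show n + 1 - (k + 1) = n - k by omega, Nat.choose_add_one_sub_succ]
  push_cast
  linear_combination (-1 : R) ^ k * hx

theorem S_eval_eq_sum (x : R) (n : ℕ) : ∀ {N : ℕ}, n < 2 * N →
    (S R n).eval x = ∑ k ∈ range N, (-1) ^ k * ((n - k).choose k : R) * x ^ (n - 2 * k) := by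
  induction n using Nat.twoStepInduction with
  | zero =>
    intro N hN
    rw [sum_eq_single_of_mem 0 (mem_range.2 (by omega))]
    · simp
    · intro k _ hk
      simp [Nat.choose_eq_zero_of_lt (Nat.pos_of_ne_zero hk)]
  | one =>
    intro N hN
    rw [sum_eq_single_of_mem 0 (mem_range.2 (by omega))]
    · simp
    · intro k _ hk
      simp [show 1 - k = 0 by omega, Nat.choose_eq_zero_of_lt (Nat.pos_of_ne_zero hk)]
  | more n ih₀ ih₁ =>
    intro N hN
    obtain ⟨M, rfl⟩ : ∃ M, N = M + 1 := ⟨N - 1, by omega⟩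
    have h₁ := ih₁ (N := M + 1) (by omega)
    rw [sum_range_succ', Nat.cast_succ] at h₁
    rw [sum_range_succ', Nat.cast_add, Nat.cast_ofNat, S_add_two, eval_sub, eval_mul, eval_X,
      h₁, ih₀ (N := M) (by omega)]
    simp only [S_summand_add_two, sum_sub_distrib, ← mul_sum, pow_zero, Nat.sub_zero, mul_zero,
      Nat.choose_zero_right, Nat.cast_one, one_mul]
    ring

theorem pow_sub_C_eval_eq_sum (x : R) {n : ℕ} (hn : 0 < n) :
    x ^ n - (C R n).eval x = ∑ k ∈ Icc 1 (n / 2),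
      (-1) ^ (k - 1) * (((n - k).choose k + (n - k - 1).choose (k - 1) : ℕ) : R) *
        x ^ (n - 2 * k) := by
  rcases Nat.lt_or_ge n 2 with hn₁ | hn₂
  · obtain rfl : n = 1 := by omega
    simp
  obtain ⟨m, rfl⟩ := Nat.exists_eq_add_of_le' hn₂
  have hS := S_eval_eq_sum x (m + 2) (N := m / 2 + 2) (by omega)
  rw [sum_range_succ'] at hS
  rw [show (m + 2) / 2 = m / 2 + 1 by omega, ← Ico_add_one_right_eq_Icc, sum_Ico_eq_sum_range,
    show m / 2 + 1 + 1 - 1 = m / 2 + 1 by omega, C_eq_S_sub_S,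
    show ((m + 2 : ℕ) : ℤ) - 2 = m by push_cast; ring, eval_sub, hS,
    S_eval_eq_sum x m (N := m / 2 + 1) (by omega)]
  simp only [pow_zero, Nat.sub_zero, mul_zero, Nat.choose_zero_right, Nat.cast_one, one_mul]
  rw [show ∀ a b c : R, c - (a + c - b) = b - a from fun _ _ _ => by ring, ← sum_sub_distrib]
  refine sum_congr rfl fun k _ => ?_
  rw [show 1 + k - 1 = k by omega, show m + 2 - (1 + k) = m + 1 - k by omega,
    show m + 2 - (k + 1) = m + 1 - k by omega, show m + 2 - 2 * (1 + k) = m - 2 * k by omega,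
    show m + 2 - 2 * (k + 1) = m - 2 * k by omega, show m + 1 - k - 1 = m - k by omega,
    add_comm 1 k]
  push_cast
  ring

theorem pow_sub_C_eval_eq_mul_sum {K : Type*} [Field K] [CharZero K] (x : K) {n : ℕ}
    (hn : 0 < n) :
    x ^ n - (C K n).eval x = n * ∑ k ∈ Icc 1 (n / 2),
      (-1) ^ (k - 1) / k * ((n - k - 1).choose (k - 1) : K) * x ^ (n - 2 * k) := by
  rw [pow_sub_C_eval_eq_sum x hn, mul_sum]
  refine sum_congr rfl fun k hk => ?_
  obtain ⟨hk₁, hk₂⟩ := mem_Icc.1 hk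
  have habsorb : ((n - k : ℕ) : K) * (n - k - 1).choose (k - 1) = (n - k).choose k * k := by
    have := Nat.add_one_mul_choose_eq (n - k - 1) (k - 1)
    rw [show n - k - 1 + 1 = n - k by omega, show k - 1 + 1 = k by omega] at this
    exact_mod_cast this
  rw [Nat.cast_sub (by omega)] at habsorb
  have hk₀ : (k : K) ≠ 0 := Nat.cast_ne_zero.2 (by omega)
  field_simp
  push_cast
  linear_combination -x ^ (n - 2 * k) * habsorb

-- For `x ^ 2 = x + 1`, iterating the recurrence gives
-- `C (n + 5) = S 4 (x) * C (n + 1) - S 3 (x) * C n` with `S 4 (x) = 0` and `S 3 (x) = 1`.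
theorem C_eval_add_five {x : R} (hx : x ^ 2 = x + 1) (n : ℤ) :
    (C R (n + 5)).eval x = -(C R n).eval x := by
  have h (m : ℤ) : (C R (m + 2)).eval x = x * (C R (m + 1)).eval x - (C R m).eval x := by simp
  linear_combination (norm := ring_nf) h (n + 3) + x * h (n + 2) + (x ^ 2 - 1) * h (n + 1) +
    (x ^ 3 - 2 * x) * h n + ((x ^ 2 + x - 1) * (C R (n + 1)).eval x - (x + 1) * (C R n).eval x) * hx

theorem C_eval_add_C_eval_of_sq_eq_add_one {x y : R} (hx : x ^ 2 = x + 1) (hy : y ^ 2 = y + 1)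
    (hxy : x + y = 1) (n : ℕ) :
    (C R n).eval x + (C R n).eval y = (-1) ^ n * if n % 5 = 0 then 4 else -1 := by
  induction n using Nat.strong_induction_on with
  | _ n ih =>
    rcases Nat.lt_or_ge n 5 with hn | hn
    · interval_cases n
      · norm_num
      · simpa using hxy
      · simp [C_two]
        linear_combination hx + hy + hxy
      · rw [show ((3 : ℕ) : ℤ) = 1 + 2 by norm_num, C_add_two]
        simp [C_two]
        linear_combination (x + 1) * hx + (y + 1) * hy - hxy
      · rw [show ((4 : ℕ) : ℤ) = 2 + 2 by norm_num, C_add_two, show (2 : ℤ) + 1 = 1 + 2 by norm_num,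
          C_add_two]
        simp [C_two]
        linear_combination (x ^ 2 + x - 2) * hx + (y ^ 2 + y - 2) * hy - hxy
    · obtain ⟨m, rfl⟩ := Nat.exists_eq_add_of_le' hn
      rw [Nat.cast_add, Nat.cast_ofNat, C_eval_add_five hx, C_eval_add_five hy, Nat.add_mod_right,
        pow_add]
      linear_combination -ih m (by omega)

end Polynomial.Chebyshev

open scoped goldenRatio

theorem lucasNat_eq_goldenRatio_pow_add_goldenConj_pow (n : ℕ) :
    (lucasNat n : ℝ) = φ ^ n + ψ ^ n := by
  induction n using Nat.twoStepInduction with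
  | zero => norm_num [lucasNat]
  | one => simp [lucasNat, goldenRatio_add_goldenConj]
  | more n h₀ h₁ =>
    rw [lucasNat, Int.cast_add, h₀, h₁]
    linear_combination -φ ^ n * goldenRatio_sq - ψ ^ n * goldenConj_sq

theorem lucasZ_natCast (n : ℕ) : lucasZ n = lucasNat n := by
  simp [lucasZ]

theorem stmt5 (n : ℕ) (hn : 0 < n) :
    (n : ℝ) * ∑ k ∈ Finset.Icc 1 (n / 2),
        (-1 : ℝ) ^ (k - 1) / k * (Nat.choose (n - k - 1) (k - 1) : ℝ) *
          (lucasZ ((n : ℤ) - 2 * k) : ℝ) =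
      if n % 5 = 0 then (lucasNat n : ℝ) - (-1 : ℝ) ^ n * 4
      else (lucasNat n : ℝ) + (-1 : ℝ) ^ n := by
  have hlucas : ∀ k ∈ Icc 1 (n / 2),
      (lucasZ ((n : ℤ) - 2 * k) : ℝ) = φ ^ (n - 2 * k) + ψ ^ (n - 2 * k) := by
    intro k hk
    rw [← lucasNat_eq_goldenRatio_pow_add_goldenConj_pow, ← lucasZ_natCast,
      Nat.cast_sub (by grind), Nat.cast_mul, Nat.cast_ofNat]
  rw [sum_congr rfl fun k hk => by rw [hlucas k hk, mul_add], sum_add_distrib, mul_add,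
    ← Chebyshev.pow_sub_C_eval_eq_mul_sum φ hn, ← Chebyshev.pow_sub_C_eval_eq_mul_sum ψ hn,
    lucasNat_eq_goldenRatio_pow_add_goldenConj_pow]
  have hC := Chebyshev.C_eval_add_C_eval_of_sq_eq_add_one goldenRatio_sq goldenConj_sq
    goldenRatio_add_goldenConj n
  split_ifs at hC ⊢ <;> linear_combination -hC
end

section
/- For every positive integer n and integer t, ∑_{k=0}^{⌊n/2⌋} (-1)^{n-k}·(n/(n-k))·C(n-k, k)·F_{n-2k+t} equals 2·F_t if n ≡ 0 (mod 5); equals -F_{t+1} if n ≡ 1 or 4 (mod 5); and equals F_{t-1} if n ≡ 2 or 3 (mod 5). -/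
open Finset Real

/-! Both sides, as functions `S n t` of `n` and `t`, satisfy `S (n + 2) t + S (n + 1) (t + 1) + S n t = 0`: for the sum this
follows termwise from Pascal's rule and the absorption identity for the coefficients
`n / (n - k) * C(n - k, k)` of the Lucas polynomials, and for the right-hand side from the
Fibonacci recurrence. The two agree for `n = 1, 2`, hence for all `n ≥ 1`. -/

lemma fibZ_natCast (a : ℕ) : fibZ a = Nat.fib a := by
  simp [fibZ]

lemma fibZ_neg_natCast (j : ℕ) : fibZ (-j) = (-1) ^ (j + 1) * Nat.fib j := by
  rcases Nat.eq_zero_or_pos j with rfl | _ <;> simp [fibZ]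

lemma fibZ_add_two (m : ℤ) : fibZ (m + 2) = fibZ (m + 1) + fibZ m := by
  obtain ⟨a, rfl | rfl⟩ := Int.eq_nat_or_neg m
  · rw [show (a : ℤ) + 2 = ((a + 2 : ℕ) : ℤ) by push_cast; ring,
      show (a : ℤ) + 1 = ((a + 1 : ℕ) : ℤ) by push_cast; ring,
      fibZ_natCast, fibZ_natCast, fibZ_natCast, Nat.fib_add_two]
    push_cast
    ring
  rcases a with _ | _ | j
  · decide
  · decide
  · rw [show -((j + 2 : ℕ) : ℤ) + 2 = -(j : ℤ) by push_cast; ring,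
      show -((j + 2 : ℕ) : ℤ) + 1 = -((j + 1 : ℕ) : ℤ) by push_cast; ring,
      fibZ_neg_natCast, fibZ_neg_natCast, fibZ_neg_natCast, Nat.fib_add_two]
    push_cast
    ring

lemma fibZ_add_one (m : ℤ) : fibZ (m + 1) = fibZ m + fibZ (m - 1) := by
  simpa [show m - 1 + 2 = m + 1 by ring] using fibZ_add_two (m - 1)

/-- The coefficient of `x ^ (n - 2k)` in the Lucas polynomial, with the sign `(-1) ^ (n - k)`. -/
noncomputable def lucasCoeff (n k : ℕ) : ℝ :=
  (-1) ^ (n - k) * ((n : ℝ) / ((n : ℝ) - (k : ℝ))) * (Nat.choose (n - k) k : ℝ)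

lemma lucasCoeff_zero {n : ℕ} (hn : 0 < n) : lucasCoeff n 0 = (-1) ^ n := by
  simp [lucasCoeff, hn.ne']

lemma lucasCoeff_eq_zero_of_half_lt {n k : ℕ} (hk : n / 2 < k) : lucasCoeff n k = 0 := by
  simp [lucasCoeff, Nat.choose_eq_zero_of_lt (show n - k < k by omega)]

lemma lucasCoeff_recurrence {n : ℕ} (hn : 0 < n) (k : ℕ) :
    lucasCoeff (n + 2) (k + 1) + lucasCoeff (n + 1) (k + 1) + lucasCoeff n k = 0 := by
  rcases le_or_gt k (n / 2) with hk | hk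
  · obtain ⟨m, rfl⟩ : ∃ m, n = m + k := ⟨n - k, by omega⟩
    have hkm : k ≤ m := by omega
    have hm : (m : ℝ) ≠ 0 := by norm_cast; omega
    have pascal : ((m + 1).choose (k + 1) : ℝ) = (m.choose k : ℝ) + (m.choose (k + 1) : ℝ) := by
      exact_mod_cast Nat.choose_succ_succ m k
    have absorb : (m.choose (k + 1) : ℝ) * (k + 1) = (m.choose k : ℝ) * (m - k) := by
      have h := congrArg (Nat.cast : ℕ → ℝ) (Nat.choose_succ_right_eq m k)
      push_cast [Nat.cast_sub hkm] at h
      exact h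
    simp only [lucasCoeff, show m + k + 2 - (k + 1) = m + 1 by omega,
      show m + k + 1 - (k + 1) = m by omega, Nat.add_sub_cancel, pow_succ]
    push_cast
    rw [show (m : ℝ) + k + 2 - (k + 1) = m + 1 by ring, show (m : ℝ) + k + 1 - (k + 1) = m by ring,
      show (m : ℝ) + k - k = m by ring, pascal]
    field_simp
    linear_combination (-1 : ℝ) ^ m * absorb
  · simp [lucasCoeff_eq_zero_of_half_lt, hk, show (n + 1) / 2 < k + 1 by omega]

noncomputable def lucasFibSum (n : ℕ) (t : ℤ) : ℝ :=
  ∑ k ∈ range (n / 2 + 1), lucasCoeff n k * fibZ ((n : ℤ) - 2 * k + t)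

lemma lucasFibSum_eq_sum_range {n m : ℕ} (hm : n / 2 < m) (t : ℤ) :
    lucasFibSum n t = ∑ k ∈ range m, lucasCoeff n k * fibZ ((n : ℤ) - 2 * k + t) := by
  refine sum_subset (range_subset_range.mpr hm) fun k _ hk => ?_
  rw [lucasCoeff_eq_zero_of_half_lt (by simpa using hk), zero_mul]

lemma lucasFibSum_recurrence {n : ℕ} (hn : 0 < n) (t : ℤ) :
    lucasFibSum (n + 2) t + lucasFibSum (n + 1) (t + 1) + lucasFibSum n t = 0 := by
  rw [lucasFibSum_eq_sum_range (m := n / 2 + 3) (by omega),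
    lucasFibSum_eq_sum_range (m := n / 2 + 3) (by omega),
    lucasFibSum_eq_sum_range (m := n / 2 + 2) (by omega),
    sum_range_succ' _ (n / 2 + 2), sum_range_succ' _ (n / 2 + 2),
    lucasCoeff_zero (by omega), lucasCoeff_zero (by omega)]
  have head : (-1 : ℝ) ^ (n + 2) * fibZ (((n + 2 : ℕ) : ℤ) - 2 * ((0 : ℕ) : ℤ) + t) +
      (-1 : ℝ) ^ (n + 1) * fibZ (((n + 1 : ℕ) : ℤ) - 2 * ((0 : ℕ) : ℤ) + (t + 1)) = 0 := by
    rw [show ((n + 1 : ℕ) : ℤ) - 2 * ((0 : ℕ) : ℤ) + (t + 1) = ((n + 2 : ℕ) : ℤ) - 2 * ((0 : ℕ) : ℤ) + t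
      by push_cast; ring]
    ring
  have tail (k : ℕ) :
      lucasCoeff (n + 2) (k + 1) * fibZ (((n + 2 : ℕ) : ℤ) - 2 * ((k + 1 : ℕ) : ℤ) + t) +
        lucasCoeff (n + 1) (k + 1) * fibZ (((n + 1 : ℕ) : ℤ) - 2 * ((k + 1 : ℕ) : ℤ) + (t + 1)) +
        lucasCoeff n k * fibZ ((n : ℤ) - 2 * k + t) = 0 := by
    rw [show ((n + 2 : ℕ) : ℤ) - 2 * ((k + 1 : ℕ) : ℤ) + t = n - 2 * k + t by push_cast; ring,
      show ((n + 1 : ℕ) : ℤ) - 2 * ((k + 1 : ℕ) : ℤ) + (t + 1) = n - 2 * k + t by push_cast; ring]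
    linear_combination (fibZ ((n : ℤ) - 2 * k + t) : ℝ) * lucasCoeff_recurrence hn k
  have tails := sum_eq_zero (s := range (n / 2 + 2)) fun k _ => tail k
  rw [sum_add_distrib, sum_add_distrib] at tails
  linear_combination tails + head

noncomputable def lucasFibSumClosedForm (n : ℕ) (t : ℤ) : ℝ :=
  if n % 5 = 0 then 2 * (fibZ t : ℝ)
  else if n % 5 = 1 ∨ n % 5 = 4 then -(fibZ (t + 1) : ℝ)
  else (fibZ (t - 1) : ℝ)

lemma lucasFibSumClosedForm_recurrence (n : ℕ) (t : ℤ) :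
    lucasFibSumClosedForm (n + 2) t + lucasFibSumClosedForm (n + 1) (t + 1) +
      lucasFibSumClosedForm n t = 0 := by
  have h₂ : (fibZ (t + 2) : ℝ) = fibZ (t + 1) + fibZ t := by exact_mod_cast fibZ_add_two t
  have h₁ : (fibZ (t + 1) : ℝ) = fibZ t + fibZ (t - 1) := by exact_mod_cast fibZ_add_one t
  have h5 : n % 5 = 0 ∨ n % 5 = 1 ∨ n % 5 = 2 ∨ n % 5 = 3 ∨ n % 5 = 4 := by omega
  rcases h5 with h | h | h | h | h <;>
  · simp only [lucasFibSumClosedForm, Nat.add_mod n, h, add_sub_cancel_right,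
      show t + 1 + 1 = t + 2 by ring]
    norm_num
    linarith

lemma lucasFibSum_one (t : ℤ) : lucasFibSum 1 t = lucasFibSumClosedForm 1 t := by
  simp [lucasFibSum, lucasFibSumClosedForm, lucasCoeff, add_comm]

lemma lucasFibSum_two (t : ℤ) : lucasFibSum 2 t = lucasFibSumClosedForm 2 t := by
  have h₂ : (fibZ (t + 2) : ℝ) = fibZ (t + 1) + fibZ t := by exact_mod_cast fibZ_add_two t
  have h₁ : (fibZ (t + 1) : ℝ) = fibZ t + fibZ (t - 1) := by exact_mod_cast fibZ_add_one t
  simp [lucasFibSum, lucasFibSumClosedForm, lucasCoeff, sum_range_succ, add_comm (2 : ℤ)]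
  linarith

lemma lucasFibSum_eq_closedForm {n : ℕ} (hn : 0 < n) (t : ℤ) :
    lucasFibSum n t = lucasFibSumClosedForm n t := by
  obtain ⟨n, rfl⟩ : ∃ m, n = m + 1 := ⟨n - 1, by omega⟩
  clear hn
  induction n using Nat.twoStepInduction generalizing t with
  | zero => exact lucasFibSum_one t
  | one => exact lucasFibSum_two t
  | more n ih₀ ih₁ =>
    linear_combination lucasFibSum_recurrence n.succ_pos t - lucasFibSumClosedForm_recurrence (n + 1) t
      - ih₁ (t + 1) - ih₀ t

theorem stmt9 (n : ℕ) (hn : 0 < n) (t : ℤ) :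
    ∑ k ∈ Finset.range (n / 2 + 1),
        (-1 : ℝ) ^ (n - k) * ((n : ℝ) / ((n : ℝ) - (k : ℝ))) * (Nat.choose (n - k) k : ℝ) *
          (fibZ ((n : ℤ) - 2 * k + t) : ℝ) =
      if n % 5 = 0 then 2 * (fibZ t : ℝ)
      else if n % 5 = 1 ∨ n % 5 = 4 then -(fibZ (t + 1) : ℝ)
      else (fibZ (t - 1) : ℝ) :=
  lucasFibSum_eq_closedForm hn t
end

section
/- For every positive integer n and integer t, ∑_{k=0}^{n} (-1)^{n-k}·(n/(n+k))·C(n+k, n-k)·F_{2k+t} equals F_t if n ≡ 0 (mod 5); equals F_{t-1}/2 if n ≡ 1 or 4 (mod 5); and equals -F_{t+1}/2 if n ≡ 2 or 3 (mod 5). -/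
open Finset Real

/-! The weight `(n/(n+k)) C(n+k, n-k)` is half of `C(n+k, 2k) + C(n+k-1, 2k)`, so
`∑ₖ (-1)^(n-k) (n/(n+k)) C(n+k, n-k) xᵏ` is a difference of two consecutive alternating
Morgan–Voyce polynomials. These obey the three-term recurrence of the Vieta–Lucas polynomials
`Cₙ` (`Cₙ(z + z⁻¹) = zⁿ + z⁻ⁿ`), and the sum is `Cₙ(x - 2) / 2`.
By Binet's formula the Fibonacci sum becomes `(φᵗ Cₙ(φ² - 2) - ψᵗ Cₙ(ψ² - 2)) / (2√5)`, and
`φ² - 2 = -ψ`, `ψ² - 2 = -φ` are the roots `2 cos(2π/5)`, `2 cos(4π/5)` of `y² + y = 1`,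
at which `n ↦ Cₙ(y)` has period `5`. -/

open Polynomial.Chebyshev goldenRatio

theorem Nat.choose_add_two_add_choose (m i : ℕ) :
    (m + 2).choose (i + 2) + m.choose (i + 2) = 2 * (m + 1).choose (i + 2) + m.choose i := by
  have h₁ : (m + 2).choose (i + 2) = (m + 1).choose (i + 1) + (m + 1).choose (i + 2) :=
    Nat.choose_succ_succ _ _
  have h₂ : (m + 1).choose (i + 1) = m.choose i + m.choose (i + 1) := Nat.choose_succ_succ _ _
  have h₃ : (m + 1).choose (i + 2) = m.choose (i + 1) + m.choose (i + 2) := Nat.choose_succ_succ _ _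
  omega

theorem Nat.add_mul_choose_add_choose {m k : ℕ} (hk : k ≤ m + 1) :
    (m + 1 + k) * ((m + 1 + k).choose (2 * k) + (m + k).choose (2 * k)) =
      2 * (m + 1) * (m + 1 + k).choose (2 * k) := by
  have h := Nat.choose_mul_succ_eq (m + k) (2 * k)
  rw [show m + k + 1 - 2 * k = m + 1 - k by omega, show m + k + 1 = m + 1 + k by omega] at h
  zify [hk] at h ⊢
  linear_combination h

theorem two_mul_div_mul_choose {K : Type*} [Field K] [CharZero K] {m k : ℕ} (hk : k ≤ m + 1) :
    2 * (((m + 1 : ℕ) : K) / ((m + 1 : ℕ) + k)) * ((m + 1 + k).choose (m + 1 - k) : K) =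
      (m + 1 + k).choose (2 * k) + (m + k).choose (2 * k) := by
  rw [Nat.choose_symm_of_eq_add (by omega : m + 1 + k = m + 1 - k + 2 * k)]
  have h := congrArg (Nat.cast : ℕ → K) (Nat.add_mul_choose_add_choose hk)
  have hne : ((m + 1 + k : ℕ) : K) ≠ 0 := Nat.cast_ne_zero.2 (by omega)
  push_cast at h hne ⊢
  field_simp
  exact h.symm

section AltMorganVoyce

variable {R : Type*} [CommRing R]

/-- `(-1)^n b_n(-x)` for the Morgan–Voyce polynomial `b_n(x) = ∑ₖ C(n+k, 2k) xᵏ`. -/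
def altMorganVoyce (n : ℕ) (x : R) : R :=
  ∑ k ∈ range (n + 1), (-1) ^ (n + k) * ((n + k).choose (2 * k) : R) * x ^ k

theorem altMorganVoyce_eq_sum_range {n m : ℕ} (h : n + 1 ≤ m) (x : R) :
    altMorganVoyce n x = ∑ k ∈ range m, (-1) ^ (n + k) * ((n + k).choose (2 * k) : R) * x ^ k := by
  refine sum_subset (range_subset_range.2 h) fun k _ hk => ?_
  rw [mem_range, not_lt] at hk
  simp [Nat.choose_eq_zero_of_lt (by omega : n + k < 2 * k)]

theorem altMorganVoyce_add_two (n : ℕ) (x : R) :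
    altMorganVoyce (n + 2) x = (x - 2) * altMorganVoyce (n + 1) x - altMorganVoyce n x := by
  have hx : x * altMorganVoyce (n + 1) x =
      ∑ j ∈ range (n + 2), (-1) ^ (n + 1 + j) * ((n + 1 + j).choose (2 * j) : R) * x ^ (j + 1) := by
    rw [altMorganVoyce, mul_sum]
    exact sum_congr rfl fun j _ => by ring
  suffices altMorganVoyce (n + 2) x + altMorganVoyce n x + 2 * altMorganVoyce (n + 1) x =
      x * altMorganVoyce (n + 1) x by linear_combination this
  rw [hx, altMorganVoyce_eq_sum_range le_rfl,
    altMorganVoyce_eq_sum_range (by omega : n + 1 ≤ n + 3),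
    altMorganVoyce_eq_sum_range (by omega : n + 2 ≤ n + 3), mul_sum, ← sum_add_distrib,
    ← sum_add_distrib, sum_range_succ']
  refine (congrArg₂ (· + ·) (sum_congr rfl fun j _ => ?_) (by simp [pow_add]; ring)).trans
    (add_zero _)
  have h := congrArg (Nat.cast : ℕ → R) (Nat.choose_add_two_add_choose (n + 1 + j) (2 * j))
  rw [show n + 2 + (j + 1) = n + 1 + j + 2 by ring, show n + 1 + (j + 1) = n + 1 + j + 1 by ring,
    show n + (j + 1) = n + 1 + j by ring, show 2 * (j + 1) = 2 * j + 2 by ring]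
  push_cast at h
  linear_combination (-1) ^ (n + 1 + j) * x ^ (j + 1) * h

theorem altMorganVoyce_add_one_sub (n : ℕ) (x : R) :
    altMorganVoyce (n + 1) x - altMorganVoyce n x = (C R (n + 1)).eval (x - 2) := by
  induction n using Nat.twoStepInduction with
  | zero => simp [altMorganVoyce, sum_range_succ]; ring
  | one => simp [altMorganVoyce, sum_range_succ, C_two]; ring
  | more n ih₁ ih₂ =>
    have hC := congrArg (Polynomial.eval (x - 2)) (C_add_two R (n + 1))
    push_cast at ih₁ ih₂ hC ⊢
    simp only [Polynomial.eval_sub, Polynomial.eval_mul, Polynomial.eval_X] at hC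
    rw [show (n : ℤ) + 1 + 2 = n + 2 + 1 by ring] at hC
    linear_combination altMorganVoyce_add_two (n + 1) x - altMorganVoyce_add_two n x - hC +
      (x - 2) * ih₂ - ih₁

end AltMorganVoyce

theorem neg_one_pow_sub_eq_pow_add {R : Type*} [Monoid R] [HasDistribNeg R] {n k : ℕ} (h : k ≤ n) :
    (-1 : R) ^ (n - k) = (-1) ^ (n + k) := by
  obtain ⟨d, rfl⟩ := Nat.exists_eq_add_of_le h
  rw [Nat.add_sub_cancel_left, add_right_comm, ← two_mul, pow_add, pow_mul, neg_one_sq, one_pow,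
    one_mul]

theorem sum_neg_one_pow_mul_div_mul_choose_mul_pow {K : Type*} [Field K] [CharZero K] {n : ℕ}
    (hn : 0 < n) (x : K) :
    ∑ k ∈ range (n + 1),
        (-1) ^ (n - k) * ((n : K) / ((n : K) + (k : K))) * ((n + k).choose (n - k) : K) * x ^ k =
      (C K n).eval (x - 2) / 2 := by
  obtain ⟨m, rfl⟩ : ∃ m, n = m + 1 := ⟨n - 1, by omega⟩
  rw [show ((m + 1 : ℕ) : ℤ) = m + 1 from Nat.cast_succ m, ← altMorganVoyce_add_one_sub,
    altMorganVoyce, altMorganVoyce_eq_sum_range (by omega : m + 1 ≤ m + 2), ← sum_sub_distrib,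
    sum_div]
  refine sum_congr rfl fun k hk => ?_
  have hk : k ≤ m + 1 := Nat.lt_succ_iff.mp (mem_range.mp hk)
  rw [neg_one_pow_sub_eq_pow_add hk]
  linear_combination (-1) ^ (m + 1 + k) * x ^ k / 2 * two_mul_div_mul_choose (K := K) hk

theorem Polynomial.Chebyshev.C_eval_of_sq_add_self_eq_one {R : Type*} [CommRing R] {y : R}
    (hy : y ^ 2 + y = 1) (n : ℕ) :
    (C R n).eval y = if n % 5 = 0 then 2 else if n % 5 = 1 ∨ n % 5 = 4 then y else -1 - y := by
  induction n using Nat.twoStepInduction with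
  | zero => simp
  | one => simp
  | more n ih₁ ih₂ =>
    have hC := congrArg (Polynomial.eval y) (C_add_two R n)
    simp only [Polynomial.eval_sub, Polynomial.eval_mul, Polynomial.eval_X] at hC
    push_cast at ih₂ ⊢
    rw [hC, ih₁, ih₂]
    rcases (by omega : n % 5 = 0 ∨ n % 5 = 1 ∨ n % 5 = 2 ∨ n % 5 = 3 ∨ n % 5 = 4)
      with h | h | h | h | h <;> simp only [Nat.add_mod n, h] <;> norm_num
    · linear_combination hy
    · linear_combination -hy
    · linear_combination -hy
    · linear_combination hy
    · ring

theorem coe_fibZ_eq (m : ℤ) : (fibZ m : ℝ) = (φ ^ m - ψ ^ m) / √5 := by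
  rcases Int.eq_nat_or_neg m with ⟨j, rfl | rfl⟩
  · simp [fibZ, Real.coe_fib_eq]
  · rcases Nat.eq_zero_or_pos j with rfl | hj
    · simp [fibZ]
    have hneg : ¬ (0 ≤ -(j : ℤ)) := by omega
    rw [fibZ, if_neg hneg, neg_neg, Int.toNat_natCast, zpow_neg, zpow_neg, zpow_natCast,
      zpow_natCast, ← inv_pow, ← inv_pow, inv_goldenRatio, inv_goldenConj, neg_pow ψ, neg_pow φ,
      Int.cast_mul, Int.cast_pow, Int.cast_neg, Int.cast_one, Int.cast_natCast, Real.coe_fib_eq]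
    ring

theorem sum_mul_fibZ_two_mul_add (s : Finset ℕ) (w : ℕ → ℝ) (t : ℤ) :
    ∑ k ∈ s, w k * (fibZ (2 * k + t) : ℝ) =
      (φ ^ t * ∑ k ∈ s, w k * (φ ^ 2) ^ k - ψ ^ t * ∑ k ∈ s, w k * (ψ ^ 2) ^ k) / √5 := by
  rw [mul_sum, mul_sum, ← sum_sub_distrib, sum_div]
  refine sum_congr rfl fun k _ => ?_
  rw [coe_fibZ_eq, zpow_add₀ goldenRatio_ne_zero, zpow_add₀ goldenConj_ne_zero, zpow_mul,
    zpow_mul, zpow_natCast, zpow_natCast, zpow_ofNat, zpow_ofNat]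
  ring

theorem stmt14 (n : ℕ) (hn : 0 < n) (t : ℤ) :
    ∑ k ∈ Finset.range (n + 1),
        (-1 : ℝ) ^ (n - k) * ((n : ℝ) / ((n : ℝ) + (k : ℝ))) * (Nat.choose (n + k) (n - k) : ℝ) *
          (fibZ (2 * k + t) : ℝ) =
      if n % 5 = 0 then (fibZ t : ℝ)
      else if n % 5 = 1 ∨ n % 5 = 4 then (fibZ (t - 1) : ℝ) / 2
      else -(fibZ (t + 1) : ℝ) / 2 := by
  have hφ : φ ^ 2 - 2 = -ψ := by linarith [goldenRatio_sq, goldenRatio_add_goldenConj]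
  have hψ : ψ ^ 2 - 2 = -φ := by linarith [goldenConj_sq, goldenRatio_add_goldenConj]
  rw [sum_mul_fibZ_two_mul_add, sum_neg_one_pow_mul_div_mul_choose_mul_pow hn,
    sum_neg_one_pow_mul_div_mul_choose_mul_pow hn, hφ, hψ,
    C_eval_of_sq_add_self_eq_one (y := -ψ) (by linarith [goldenConj_sq]) n,
    C_eval_of_sq_add_self_eq_one (y := -φ) (by linarith [goldenRatio_sq]) n]
  split_ifs
  · rw [coe_fibZ_eq]
    ring
  · rw [coe_fibZ_eq, zpow_sub_one₀ goldenRatio_ne_zero, zpow_sub_one₀ goldenConj_ne_zero,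
      inv_goldenRatio, inv_goldenConj]
    ring
  · rw [coe_fibZ_eq, zpow_add_one₀ goldenRatio_ne_zero, zpow_add_one₀ goldenConj_ne_zero]
    linear_combination (φ ^ t - ψ ^ t) / √5 * goldenRatio_add_goldenConj
end
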